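/- Fix a prime ℓ and n ≥ 0. The map Ψ^co from the disjoint union over ν ∈ Part(n,ℓ) of the sets ∏_{i≥0} Part_ℓ(m_{ℓ^i}(ν)) to Part(n), given by ((λ^(ℓ^i))_i ↦ Σ_{i≥0} ℓ^i·(λ^(ℓ^i))ᵗ), is a bijection. -/

import Mathlib

/-- A function `f : ℕ → ℕ` is a partition of `m` if it is weakly decreasing,
has finite support, and its parts sum to `m`.  Here `f i` is the `(i+1)`-st part
`λ_{i+1}` of the partition. -/
def IsPartition (m : ℕ) (f : ℕ → ℕ) : Prop :=
  Antitone f ∧ (Function.support f).Finite ∧ ∑ᶠ i, f i = m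

/-- The transpose partition: `ptranspose f j` is the `(j+1)`-st part `(fᵗ)_{j+1}`
of the transpose, i.e. the number of indices `i` with `f i ≥ j + 1`. -/
noncomputable def ptranspose (f : ℕ → ℕ) : ℕ → ℕ :=
  fun j => {i : ℕ | j + 1 ≤ f i}.ncard

/-- `pmult f j` is the multiplicity `m_j(f)` of `j ≥ 1` as a part of `f`. -/
noncomputable def pmult (f : ℕ → ℕ) (j : ℕ) : ℕ :=
  {i : ℕ | f i = j}.ncard

/-- All (nonzero) parts of `f` are powers of `ℓ`. -/
def PartsPowersOf (ℓ : ℕ) (f : ℕ → ℕ) : Prop :=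
  ∀ i, f i ≠ 0 → ∃ k, f i = ℓ ^ k

/-- `f` is `ℓ`-regular: every part `j ≥ 1` has multiplicity `< ℓ`. -/
def IsRegularPartition (ℓ : ℕ) (f : ℕ → ℕ) : Prop :=
  ∀ j, 1 ≤ j → pmult f j < ℓ

/-- The combinatorial generalized Springer map: given a tuple `lam` where `lam i`
is (meant to be) an `ℓ`-regular partition of `m_{ℓ^i}(ν)`, it returns the
partition `Σ_{i ≥ 0} ℓ^i · (lam i)ᵗ` (componentwise operations). -/
noncomputable def psiCo (ℓ : ℕ) (lam : ℕ → ℕ → ℕ) : ℕ → ℕ :=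
  fun j => ∑ᶠ i, ℓ ^ i * ptranspose (lam i) j

/-! Transposition turns multiplicities into differences: `m_{j+1}(λ) = λᵗ_j - λᵗ_{j+1}`.
Hence `μ = Σ_i ℓ^i (λ^(ℓ^i))ᵗ` satisfies `μ_j - μ_{j+1} = Σ_i ℓ^i m_{j+1}(λ^(ℓ^i))`, and since
each `λ^(ℓ^i)` is `ℓ`-regular, the multiplicities `m_{j+1}(λ^(ℓ^i))` are exactly the base-`ℓ`
digits of `μ_j - μ_{j+1}`. A partition is determined by its multiplicities, and every finitely
supported multiplicity function occurs, so `μ` determines each `λ^(ℓ^i)`, and `ν` is determined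
by `m_{ℓ^i}(ν) = |λ^(ℓ^i)|`. Sizes match because
`|μ| = Σ_i ℓ^i |(λ^(ℓ^i))ᵗ| = Σ_i ℓ^i |λ^(ℓ^i)| = Σ_i ℓ^i m_{ℓ^i}(ν) = |ν|`. -/

open Function

open Finset in
theorem sum_range_ite_lt {a b : ℕ} (h : a ≤ b) :
    ∑ i ∈ range b, (if i < a then 1 else 0) = a := by
  rw [sum_boole, Nat.cast_id, show {i ∈ range b | i < a} = range a by ext; simp; omega,
    card_range]

section Transpose

variable {f : ℕ → ℕ}

theorem lt_ptranspose_iff (hf : Antitone f) (hfin : (support f).Finite) {i j : ℕ} :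
    i < ptranspose f j ↔ j < f i := by
  constructor
  · intro h
    by_contra! hij
    have hsub : {i' | j + 1 ≤ f i'} ⊆ Set.Iio i := fun i' (hi' : j + 1 ≤ f i') =>
      not_le.1 fun h' => absurd ((hf h').trans hij) (by omega)
    exact h.not_ge ((Set.ncard_le_ncard hsub (Set.finite_Iio i)).trans_eq (Set.ncard_Iio_nat i))
  · intro h
    have hsub : Set.Iic i ⊆ {i' | j + 1 ≤ f i'} := fun i' hi' => h.trans_le (hf hi')
    have hfin' : {i' | j + 1 ≤ f i'}.Finite :=
      hfin.subset fun i' hi' => Nat.pos_iff_ne_zero.1 (Nat.lt_of_lt_of_le j.succ_pos hi')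
    exact (Set.ncard_Iic_nat i).symm.trans_le (Set.ncard_le_ncard hsub hfin')

theorem ptranspose_antitone (hf : Antitone f) (hfin : (support f).Finite) :
    Antitone (ptranspose f) := fun a b hab =>
  le_of_forall_lt fun i hi => by
    rw [lt_ptranspose_iff hf hfin] at hi ⊢
    exact hab.trans_lt hi

theorem ptranspose_eq_zero_of_le (hf : Antitone f) (hfin : (support f).Finite) {j : ℕ}
    (hj : f 0 ≤ j) : ptranspose f j = 0 :=
  Nat.eq_zero_of_not_pos fun h =>
    absurd ((lt_ptranspose_iff hf hfin).1 h) (not_lt.2 hj)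

theorem finite_support_ptranspose (hf : Antitone f) (hfin : (support f).Finite) :
    (support (ptranspose f)).Finite :=
  (Set.finite_Iio (f 0)).subset fun _ hj =>
    not_le.1 fun h => hj (ptranspose_eq_zero_of_le hf hfin h)

theorem ptranspose_ptranspose (hf : Antitone f) (hfin : (support f).Finite) :
    ptranspose (ptranspose f) = f := by
  funext i
  have hset : {j | i + 1 ≤ ptranspose f j} = Set.Iio (f i) := by
    ext j
    exact lt_ptranspose_iff hf hfin
  rw [ptranspose, hset, Set.ncard_Iio_nat]

theorem pmult_succ (hf : Antitone f) (hfin : (support f).Finite) (j : ℕ) :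
    pmult f (j + 1) = ptranspose f j - ptranspose f (j + 1) := by
  have hset : {i | f i = j + 1} = Set.Ico (ptranspose f (j + 1)) (ptranspose f j) := by
    ext i
    simp only [Set.mem_ofPred_eq, Set.mem_Ico, not_lt.symm, lt_ptranspose_iff hf hfin]
    omega
  rw [pmult, hset, Set.ncard_Ico_nat]

theorem support_eq_Iio_ptranspose_zero (hf : Antitone f) (hfin : (support f).Finite) :
    support f = Set.Iio (ptranspose f 0) := by
  ext i
  rw [Set.mem_Iio, lt_ptranspose_iff hf hfin, mem_support, Nat.pos_iff_ne_zero]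

open Finset in
theorem finsum_ptranspose (hf : Antitone f) (hfin : (support f).Finite) :
    ∑ᶠ j, ptranspose f j = ∑ᶠ i, f i := by
  have hft := ptranspose_antitone hf hfin
  have hftfin := finite_support_ptranspose hf hfin
  rw [finsum_eq_sum_of_support_subset _ (s := range (f 0)) (by
      rw [coe_range, support_eq_Iio_ptranspose_zero hft hftfin, ptranspose_ptranspose hf hfin]),
    finsum_eq_sum_of_support_subset _ (s := range (ptranspose f 0)) (by
      rw [coe_range, support_eq_Iio_ptranspose_zero hf hfin])]
  calc ∑ j ∈ range (f 0), ptranspose f j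
      = ∑ j ∈ range (f 0), ∑ i ∈ range (ptranspose f 0), if j < f i then 1 else 0 :=
        sum_congr rfl fun j _ => by
          simp_rw [← lt_ptranspose_iff hf hfin]
          exact (sum_range_ite_lt (hft j.zero_le)).symm
    _ = ∑ i ∈ range (ptranspose f 0), ∑ j ∈ range (f 0), if j < f i then 1 else 0 := sum_comm
    _ = ∑ i ∈ range (ptranspose f 0), f i :=
        sum_congr rfl fun i _ => sum_range_ite_lt (hf i.zero_le)

end Transpose

section Multiplicities

variable {f g : ℕ → ℕ}

theorem eq_of_sub_succ_eq (hf : Antitone f) (hfin : (support f).Finite) (hg : Antitone g)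
    (hgfin : (support g).Finite) (h : ∀ j, f j - f (j + 1) = g j - g (j + 1)) : f = g := by
  obtain ⟨N, hN⟩ := (hfin.union hgfin).bddAbove
  have hvanish : ∀ j, N < j → f j = 0 ∧ g j = 0 := fun j hj => by
    constructor <;> by_contra hne <;> exact absurd (hN (by simp [hne])) (not_le.2 hj)
  have key : ∀ k j, N < j + k → f j = g j := by
    intro k
    induction k with
    | zero => exact fun j hj => by rw [(hvanish j hj).1, (hvanish j hj).2]
    | succ k ih =>
      intro j hj
      have := ih (j + 1) (by omega)
      have := h j
      have := hf (Nat.le_add_right j 1)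
      have := hg (Nat.le_add_right j 1)
      omega
  exact funext fun j => key (N + 1) j (by omega)

theorem eq_of_pmult_succ_eq (hf : Antitone f) (hfin : (support f).Finite) (hg : Antitone g)
    (hgfin : (support g).Finite) (h : ∀ j, pmult f (j + 1) = pmult g (j + 1)) : f = g := by
  rw [← ptranspose_ptranspose hf hfin, ← ptranspose_ptranspose hg hgfin,
    eq_of_sub_succ_eq (ptranspose_antitone hf hfin) (finite_support_ptranspose hf hfin)
      (ptranspose_antitone hg hgfin) (finite_support_ptranspose hg hgfin)
      fun j => by rw [← pmult_succ hf hfin, ← pmult_succ hg hgfin, h]]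

theorem eq_zero_of_pmult_succ_eq_zero (hf : Antitone f) (hfin : (support f).Finite)
    (h : ∀ j, pmult f (j + 1) = 0) : f = 0 :=
  eq_of_pmult_succ_eq hf hfin antitone_const (by simp) fun j => by rw [h j]; simp [pmult]

theorem exists_pmult_succ_eq {c : ℕ → ℕ} (hc : (support c).Finite) :
    ∃ f, Antitone f ∧ (support f).Finite ∧ ∀ j, pmult f (j + 1) = c j := by
  obtain ⟨N, hN⟩ := hc.bddAbove
  -- the transpose of the desired partition is the tail sum of `c`
  set t : ℕ → ℕ := fun j => ∑ k ∈ Finset.Ico j (N + 1), c k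
  have ht : Antitone t := fun a b hab =>
    Finset.sum_le_sum_of_subset (Finset.Ico_subset_Ico_left hab)
  have htfin : (support t).Finite := (Set.finite_Iio (N + 1)).subset fun j hj =>
    Set.mem_Iio.2 <| not_le.1 fun h => hj (by simp [t, Finset.Ico_eq_empty_of_le h])
  have hdiff : ∀ j, t j - t (j + 1) = c j := by
    intro j
    rcases lt_or_ge j (N + 1) with h | h
    · simp only [t, Finset.sum_eq_sum_Ico_succ_bot h]
      omega
    · have hcj : c j = 0 := by_contra fun hcj => absurd (hN hcj) (by omega)
      simp [t, Finset.Ico_eq_empty_of_le h, Finset.Ico_eq_empty_of_le (h.trans j.le_succ), hcj]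
  refine ⟨ptranspose t, ptranspose_antitone ht htfin, finite_support_ptranspose ht htfin,
    fun j => ?_⟩
  rw [pmult_succ (ptranspose_antitone ht htfin) (finite_support_ptranspose ht htfin),
    ptranspose_ptranspose ht htfin, hdiff]

theorem eq_zero_of_isPartition_zero (hf : IsPartition 0 f) : f = 0 :=
  funext fun i => Nat.eq_zero_of_le_zero <|
    hf.2.2 ▸ single_le_finsum i hf.2.1 fun _ => Nat.zero_le _

theorem finsum_eq_finsum_mul_pmult (hfin : (support f).Finite) :
    ∑ᶠ i, f i = ∑ᶠ k, k * pmult f k := by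
  classical
  rw [finsum_eq_sum_of_support_subset f (s := hfin.toFinset) (by simp),
    ← finsum_sum_filter f hfin.toFinset f]
  refine finsum_congr fun k => ?_
  rw [Finset.sum_congr rfl fun i hi => (Finset.mem_filter.1 hi).2, Finset.sum_const, smul_eq_mul,
    mul_comm]
  rcases eq_or_ne k 0 with rfl | hk
  · simp
  · rw [pmult, ← Set.ncard_coe_finset]
    congr 2
    ext i
    simp only [Finset.coe_filter, Set.Finite.mem_toFinset, mem_support, Set.mem_ofPred_eq]
    exact ⟨And.right, fun h => ⟨h ▸ hk, h⟩⟩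

end Multiplicities

section PowerParts

variable {ℓ : ℕ} {f g : ℕ → ℕ}

theorem PartsPowersOf.pmult_eq_zero (hf : PartsPowersOf ℓ f) {k : ℕ} (hk : k ≠ 0)
    (hpow : ∀ e, ℓ ^ e ≠ k) : pmult f k = 0 := by
  by_contra hne
  obtain ⟨i, hi : f i = k⟩ := Set.nonempty_of_ncard_ne_zero hne
  obtain ⟨e, he⟩ := hf i (hi ▸ hk)
  exact hpow e (he ▸ hi)

theorem PartsPowersOf.finsum_eq_finsum_pow_mul_pmult (hℓ : 2 ≤ ℓ) (hfin : (support f).Finite)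
    (hf : PartsPowersOf ℓ f) : ∑ᶠ i, f i = ∑ᶠ e, ℓ ^ e * pmult f (ℓ ^ e) := by
  rw [finsum_eq_finsum_mul_pmult hfin, ← finsum_mem_univ,
    finsum_mem_inter_support_eq' _ _ (Set.range (ℓ ^ ·)),
    finsum_mem_range (Nat.pow_right_injective hℓ)]
  intro k hk
  simp only [Set.mem_univ, Set.mem_range, true_iff]
  by_contra! hpow
  exact hk (by simp only [hf.pmult_eq_zero (left_ne_zero_of_mul hk) hpow, mul_zero])

theorem PartsPowersOf.eq_of_pmult_pow_eq (hf : Antitone f) (hfin : (support f).Finite)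
    (hfpow : PartsPowersOf ℓ f) (hg : Antitone g) (hgfin : (support g).Finite)
    (hgpow : PartsPowersOf ℓ g) (h : ∀ e, pmult f (ℓ ^ e) = pmult g (ℓ ^ e)) : f = g := by
  refine eq_of_pmult_succ_eq hf hfin hg hgfin fun j => ?_
  by_cases hpow : ∃ e, ℓ ^ e = j + 1
  · obtain ⟨e, he⟩ := hpow
    rw [← he, h]
  · push Not at hpow
    rw [hfpow.pmult_eq_zero j.succ_ne_zero hpow, hgpow.pmult_eq_zero j.succ_ne_zero hpow]

theorem exists_partsPowersOf_pmult_pow_eq (hℓ : 2 ≤ ℓ) {a : ℕ → ℕ} (ha : (support a).Finite) :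
    ∃ f, Antitone f ∧ (support f).Finite ∧ PartsPowersOf ℓ f ∧ ∀ e, pmult f (ℓ ^ e) = a e := by
  set c : ℕ → ℕ := fun j => if ℓ ^ Nat.log ℓ (j + 1) = j + 1 then a (Nat.log ℓ (j + 1)) else 0
  have hc_pow : ∀ e, c (ℓ ^ e - 1) = a e := fun e => by
    simp [c, Nat.sub_add_cancel (Nat.one_le_pow e ℓ (by omega)), Nat.log_pow (by omega : 1 < ℓ)]
  have hcfin : (support c).Finite := (ha.image (ℓ ^ · - 1)).subset fun j hj => by
    simp only [c, mem_support, ne_eq, ite_eq_right_iff, Classical.not_imp] at hj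
    exact ⟨_, hj.2, by simp only; omega⟩
  obtain ⟨f, hf, hfin, hfc⟩ := exists_pmult_succ_eq hcfin
  have hfmult : ∀ k, k ≠ 0 → pmult f k = c (k - 1) := fun k hk => by
    obtain ⟨j, rfl⟩ := Nat.exists_eq_succ_of_ne_zero hk
    exact hfc j
  refine ⟨f, hf, hfin, fun i hi => ?_, fun e => by
    rw [hfmult _ (pow_ne_zero e (by omega)), hc_pow]⟩
  have hmult : pmult f (f i) ≠ 0 :=
    Set.ncard_ne_zero_of_mem (rfl : f i = f i) (hfin.subset fun i' (hi' : f i' = f i) => by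
      rwa [mem_support, hi'])
  rw [hfmult _ hi] at hmult
  simp only [c, Nat.sub_add_cancel (Nat.one_le_iff_ne_zero.2 hi), ne_eq, ite_eq_right_iff,
    Classical.not_imp] at hmult
  exact ⟨_, hmult.1.symm⟩

end PowerParts

section Digits

open Finset

variable {ℓ : ℕ}

theorem sum_range_pow_mul_div_pow_mod {I a : ℕ} (ha : a < ℓ ^ I) :
    ∑ i ∈ range I, ℓ ^ i * (a / ℓ ^ i % ℓ) = a := by
  induction I generalizing a with
  | zero => simp_all
  | succ I ih =>
    have hdiv : a / ℓ < ℓ ^ I := Nat.div_lt_of_lt_mul (by rwa [← pow_succ'])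
    calc ∑ i ∈ range (I + 1), ℓ ^ i * (a / ℓ ^ i % ℓ)
        = a % ℓ + ℓ * ∑ i ∈ range I, ℓ ^ i * (a / ℓ / ℓ ^ i % ℓ) := by
          simp only [sum_range_succ', mul_sum, pow_succ', Nat.div_div_eq_div_mul, pow_zero,
            Nat.div_one, one_mul, mul_assoc, add_comm]
      _ = a := by rw [ih hdiv, Nat.mod_add_div]

theorem sum_range_pow_mul_div_pow_mod_of_lt {d : ℕ → ℕ} (hd : ∀ k, d k < ℓ) {I i : ℕ}
    (hi : i < I) : (∑ k ∈ range I, ℓ ^ k * d k) / ℓ ^ i % ℓ = d i := by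
  have hℓ : 0 < ℓ := (hd 0).pos
  cases I with
  | zero => omega
  | succ I =>
    have hsplit :
        ∑ k ∈ range (I + 1), ℓ ^ k * d k = d 0 + ℓ * ∑ k ∈ range I, ℓ ^ k * d (k + 1) := by
      simp only [sum_range_succ', mul_sum, pow_succ', pow_zero, one_mul, mul_assoc, add_comm]
    rw [hsplit]
    cases i with
    | zero => rw [pow_zero, Nat.div_one, Nat.add_mul_mod_self_left, Nat.mod_eq_of_lt (hd 0)]
    | succ i =>
      rw [pow_succ', ← Nat.div_div_eq_div_mul, Nat.add_mul_div_left _ _ hℓ, Nat.div_eq_of_lt (hd 0),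
        zero_add, sum_range_pow_mul_div_pow_mod_of_lt (fun k => hd (k + 1)) (by omega)]

theorem finsum_pow_mul_div_pow_mod (hℓ : 1 < ℓ) (a : ℕ) :
    ∑ᶠ i, ℓ ^ i * (a / ℓ ^ i % ℓ) = a := by
  rw [finsum_eq_sum_of_support_subset _ (s := range a) fun i hi => ?_,
    sum_range_pow_mul_div_pow_mod (Nat.lt_pow_self hℓ)]
  by_contra! h
  have hlt : a < ℓ ^ i := (Nat.lt_pow_self hℓ).trans_le
    (Nat.pow_le_pow_right (by omega) (by simpa using h))
  exact hi (by simp only [Nat.div_eq_of_lt hlt, Nat.zero_mod, mul_zero])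

theorem finsum_pow_mul_div_pow_mod_of_lt {d : ℕ → ℕ} (hd : ∀ k, d k < ℓ)
    (hfin : (support d).Finite) (i : ℕ) : (∑ᶠ k, ℓ ^ k * d k) / ℓ ^ i % ℓ = d i := by
  obtain ⟨N, hN⟩ := hfin.bddAbove
  rw [finsum_eq_sum_of_support_subset _ (s := range (max N i + 1)) fun k hk => ?_,
    sum_range_pow_mul_div_pow_mod_of_lt hd (by omega)]
  have := hN (right_ne_zero_of_mul hk)
  simp only [coe_range, Set.mem_Iio]
  omega

end Digits

section PsiCo

variable {ℓ : ℕ} {lam : ℕ → ℕ → ℕ} {μ : ℕ → ℕ}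

theorem psiCo_eq_sum {s : Finset ℕ} (hs : support lam ⊆ s) (j : ℕ) :
    psiCo ℓ lam j = ∑ i ∈ s, ℓ ^ i * ptranspose (lam i) j :=
  finsum_eq_sum_of_support_subset _ fun i hi => hs fun h0 => hi (by simp [h0, ptranspose])

theorem psiCo_eq_add (hanti : ∀ i, Antitone (lam i)) (hfin : ∀ i, (support (lam i)).Finite)
    (hsupp : (support lam).Finite) (j : ℕ) :
    psiCo ℓ lam j = ∑ᶠ i, ℓ ^ i * pmult (lam i) (j + 1) + psiCo ℓ lam (j + 1) := by
  have hfinite (F : (ℕ → ℕ) → ℕ) (hF : F 0 = 0) : (support fun i => ℓ ^ i * F (lam i)).Finite :=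
    hsupp.subset fun i hi h0 => hi (by simp [h0, hF])
  rw [psiCo, psiCo, ← finsum_add_distrib (hfinite (pmult · (j + 1)) (by simp [pmult]))
    (hfinite (ptranspose · (j + 1)) (by simp [ptranspose]))]
  refine finsum_congr fun i => ?_
  rw [← mul_add, pmult_succ (hanti i) (hfin i),
    Nat.sub_add_cancel (ptranspose_antitone (hanti i) (hfin i) (Nat.le_add_right j 1))]

theorem psiCo_antitone (hanti : ∀ i, Antitone (lam i)) (hfin : ∀ i, (support (lam i)).Finite)
    (hsupp : (support lam).Finite) : Antitone (psiCo ℓ lam) :=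
  antitone_nat_of_succ_le fun j => by
    rw [psiCo_eq_add hanti hfin hsupp j]
    exact Nat.le_add_left _ _

theorem finite_support_psiCo (hanti : ∀ i, Antitone (lam i))
    (hfin : ∀ i, (support (lam i)).Finite) (hsupp : (support lam).Finite) :
    (support (psiCo ℓ lam)).Finite := by
  refine (hsupp.biUnion fun i _ => finite_support_ptranspose (hanti i) (hfin i)).subset
    fun j hj => ?_
  rw [mem_support, psiCo_eq_sum hsupp.coe_toFinset.superset] at hj
  obtain ⟨i, hi, hne⟩ := Finset.exists_ne_zero_of_sum_ne_zero hj
  exact Set.mem_biUnion (hsupp.mem_toFinset.1 hi) (right_ne_zero_of_mul hne)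

theorem finsum_psiCo (hanti : ∀ i, Antitone (lam i)) (hfin : ∀ i, (support (lam i)).Finite)
    (hsupp : (support lam).Finite) :
    ∑ᶠ j, psiCo ℓ lam j = ∑ᶠ i, ℓ ^ i * ∑ᶠ j, lam i j := by
  have hs : support lam ⊆ hsupp.toFinset := hsupp.coe_toFinset.superset
  simp_rw [psiCo_eq_sum hs]
  rw [finsum_sum_comm _ _ fun i _ => (finite_support_ptranspose (hanti i) (hfin i)).subset
      (support_mul_subset_right _ _),
    finsum_eq_sum_of_support_subset _ fun i hi => hs fun h0 => hi (by simp [h0])]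
  refine Finset.sum_congr rfl fun i _ => ?_
  rw [← mul_finsum, finsum_ptranspose (hanti i) (hfin i)]

theorem pmult_eq_psiCo_sub_div_pow_mod (hanti : ∀ i, Antitone (lam i))
    (hfin : ∀ i, (support (lam i)).Finite) (hsupp : (support lam).Finite)
    (hreg : ∀ i, IsRegularPartition ℓ (lam i)) (i j : ℕ) :
    pmult (lam i) (j + 1) = (psiCo ℓ lam j - psiCo ℓ lam (j + 1)) / ℓ ^ i % ℓ := by
  rw [psiCo_eq_add hanti hfin hsupp j, Nat.add_sub_cancel,
    finsum_pow_mul_div_pow_mod_of_lt (fun i => hreg i _ (Nat.le_add_left 1 j)) _ i]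
  exact hsupp.subset fun i hi h0 => hi (by simp [h0, pmult])

theorem exists_regular_psiCo_eq (hℓ : 2 ≤ ℓ) (hμ : Antitone μ) (hμfin : (support μ).Finite) :
    ∃ lam : ℕ → ℕ → ℕ, (∀ i, Antitone (lam i)) ∧ (∀ i, (support (lam i)).Finite) ∧
      (support lam).Finite ∧ (∀ i, IsRegularPartition ℓ (lam i)) ∧ psiCo ℓ lam = μ := by
  set D : ℕ → ℕ := fun j => μ j - μ (j + 1)
  have hDfin : (support D).Finite := hμfin.subset fun j hj h0 => hj (by simp [D, h0])
  choose lam hanti hfin hmult using fun i =>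
    exists_pmult_succ_eq (c := fun j => D j / ℓ ^ i % ℓ)
      (hDfin.subset fun j hj h0 => hj (by simp [h0]))
  have hsupp : (support lam).Finite := (Set.finite_Iio (μ 0)).subset fun i hi =>
    Set.mem_Iio.2 <| not_le.1 fun hi' => hi <| eq_zero_of_pmult_succ_eq_zero (hanti i) (hfin i)
      fun j => by
        rw [hmult, Nat.div_eq_of_lt, Nat.zero_mod]
        calc D j ≤ μ 0 := (Nat.sub_le _ _).trans (hμ (Nat.zero_le j))
          _ < ℓ ^ μ 0 := Nat.lt_pow_self (by omega)
          _ ≤ ℓ ^ i := Nat.pow_le_pow_right (by omega) hi'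
  refine ⟨lam, hanti, hfin, hsupp, fun i k hk => ?_, ?_⟩
  · obtain ⟨j, rfl⟩ := Nat.exists_eq_add_of_le' hk
    exact hmult i j ▸ Nat.mod_lt _ (by omega)
  · refine eq_of_sub_succ_eq (psiCo_antitone hanti hfin hsupp)
      (finite_support_psiCo hanti hfin hsupp) hμ hμfin fun j => ?_
    rw [psiCo_eq_add hanti hfin hsupp j, Nat.add_sub_cancel]
    simp_rw [hmult]
    exact finsum_pow_mul_div_pow_mod (by omega) (D j)

end PsiCo

def psiCoDomain (ℓ n : ℕ) : Set ((ℕ → ℕ) × (ℕ → ℕ → ℕ)) :=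
  {p | IsPartition n p.1 ∧ PartsPowersOf ℓ p.1 ∧
    ∀ i, IsPartition (pmult p.1 (ℓ ^ i)) (p.2 i) ∧ IsRegularPartition ℓ (p.2 i)}

section Bijection

variable {ℓ n : ℕ} {ν : ℕ → ℕ} {lam : ℕ → ℕ → ℕ}

theorem finite_support_of_isPartition_pmult (hℓ : 1 < ℓ) (hν : IsPartition n ν)
    (hlam : ∀ i, IsPartition (pmult ν (ℓ ^ i)) (lam i)) : (support lam).Finite := by
  refine (Set.finite_Iio n).subset fun i hi => Set.mem_Iio.2 <| not_le.1 fun hni => hi ?_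
  have hmult : pmult ν (ℓ ^ i) = 0 := by
    by_contra hne
    obtain ⟨i', hi' : ν i' = ℓ ^ i⟩ := Set.nonempty_of_ncard_ne_zero hne
    have hle : ν i' ≤ n := hν.2.2 ▸ single_le_finsum i' hν.2.1 fun _ => Nat.zero_le _
    exact absurd (hi' ▸ hle) (not_le.2 ((Nat.lt_pow_self hℓ).trans_le' hni))
  exact eq_zero_of_isPartition_zero (hmult ▸ hlam i)

theorem isPartition_psiCo (hℓ : 2 ≤ ℓ) (hν : IsPartition n ν) (hνpow : PartsPowersOf ℓ ν)
    (hlam : ∀ i, IsPartition (pmult ν (ℓ ^ i)) (lam i)) : IsPartition n (psiCo ℓ lam) := by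
  have hanti i := (hlam i).1
  have hfin i := (hlam i).2.1
  have hsupp := finite_support_of_isPartition_pmult hℓ hν hlam
  refine ⟨psiCo_antitone hanti hfin hsupp, finite_support_psiCo hanti hfin hsupp, ?_⟩
  rw [finsum_psiCo hanti hfin hsupp, ← hν.2.2, hνpow.finsum_eq_finsum_pow_mul_pmult hℓ hν.2.1]
  exact finsum_congr fun i => by rw [(hlam i).2.2]

theorem psiCo_injOn (hℓ : 2 ≤ ℓ) :
    Set.InjOn (fun p => psiCo ℓ p.2) (psiCoDomain ℓ n) := by
  rintro ⟨ν₁, lam₁⟩ ⟨hν₁, hpow₁, hlam₁⟩ ⟨ν₂, lam₂⟩ ⟨hν₂, hpow₂, hlam₂⟩ (h : psiCo ℓ lam₁ = _)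
  have hdigits {ν : ℕ → ℕ} {lam : ℕ → ℕ → ℕ} (hν : IsPartition n ν)
      (hlam : ∀ i, IsPartition (pmult ν (ℓ ^ i)) (lam i) ∧ IsRegularPartition ℓ (lam i))
      (i j : ℕ) :
      pmult (lam i) (j + 1) = (psiCo ℓ lam j - psiCo ℓ lam (j + 1)) / ℓ ^ i % ℓ :=
    pmult_eq_psiCo_sub_div_pow_mod (fun i => (hlam i).1.1) (fun i => (hlam i).1.2.1)
      (finite_support_of_isPartition_pmult hℓ hν fun i => (hlam i).1) (fun i => (hlam i).2) i j
  have hlam : lam₁ = lam₂ := funext fun i =>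
    eq_of_pmult_succ_eq (hlam₁ i).1.1 (hlam₁ i).1.2.1 (hlam₂ i).1.1 (hlam₂ i).1.2.1 fun j => by
      rw [hdigits hν₁ hlam₁, hdigits hν₂ hlam₂, h]
  have hν : ν₁ = ν₂ := hpow₁.eq_of_pmult_pow_eq hν₁.1 hν₁.2.1 hν₂.1 hν₂.2.1 hpow₂ fun e => by
    rw [← (hlam₁ e).1.2.2, ← (hlam₂ e).1.2.2, hlam]
  rw [hν, hlam]

theorem psiCo_surjOn (hℓ : 2 ≤ ℓ) :
    Set.SurjOn (fun p => psiCo ℓ p.2) (psiCoDomain ℓ n) {μ | IsPartition n μ} := by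
  intro μ (hμ : IsPartition n μ)
  obtain ⟨lam, hanti, hfin, hsupp, hreg, rfl⟩ := exists_regular_psiCo_eq hℓ hμ.1 hμ.2.1
  obtain ⟨ν, hν, hνfin, hνpow, hνmult⟩ := exists_partsPowersOf_pmult_pow_eq hℓ
    (a := fun e => ∑ᶠ j, lam e j) (hsupp.subset fun i hi h0 => hi (by simp [h0]))
  refine ⟨(ν, lam), ⟨⟨hν, hνfin, ?_⟩, hνpow,
    fun i => ⟨⟨hanti i, hfin i, (hνmult i).symm⟩, hreg i⟩⟩, rfl⟩
  rw [hνpow.finsum_eq_finsum_pow_mul_pmult hℓ hνfin, ← hμ.2.2, finsum_psiCo hanti hfin hsupp]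
  simp only [hνmult]

theorem psiCo_bijOn (hℓ : 2 ≤ ℓ) :
    Set.BijOn (fun p => psiCo ℓ p.2) (psiCoDomain ℓ n) {μ | IsPartition n μ} :=
  ⟨fun _ hp => isPartition_psiCo hℓ hp.1 hp.2.1 fun i => (hp.2.2 i).1, psiCo_injOn hℓ,
    psiCo_surjOn hℓ⟩

end Bijection

/-- The map `Ψ^co` from the disjoint union, over `ν ∈ Part(n,ℓ)`, of the sets
`∏_{i≥0} Part_ℓ(m_{ℓ^i}(ν))` to `Part(n)`, given by
`(λ^{(ℓ^i)})_i ↦ Σ_{i≥0} ℓ^i · (λ^{(ℓ^i)})ᵗ`, is a bijection. -/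
theorem PsiCo_bijection (ℓ n : ℕ) (hℓ : ℓ.Prime) :
    ∃ e : {p : (ℕ → ℕ) × (ℕ → ℕ → ℕ) //
            IsPartition n p.1 ∧ PartsPowersOf ℓ p.1 ∧
            ∀ i, IsPartition (pmult p.1 (ℓ ^ i)) (p.2 i) ∧
              IsRegularPartition ℓ (p.2 i)} ≃
          {μ : ℕ → ℕ // IsPartition n μ},
      ∀ p, (e p : ℕ → ℕ) = psiCo ℓ p.1.2 :=
  ⟨(psiCo_bijOn hℓ.two_le).equiv _, fun _ => rfl⟩
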